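/- arXiv:2505.18489 — 2 statements merged into one kernel-verified Lean document; each statement's English description precedes it below -/
import Mathlib

section
/- Let f ∈ ℂ[x_1,…,x_n] be homogeneous of degree n and W = p·f. The map ⊕_{k≥0} R(f)_{kn} → R(W)_0 sending the class of a homogeneous polynomial u(x) of degree kn to the class of p^k·u(x) is a well-defined ring isomorphism, where R(f) = ℂ[x]/(∂f/∂x_1,…,∂f/∂x_n), R(W) = ℂ[x,p]/(∂W/∂x_1,…,∂W/∂x_n,∂W/∂p), and R(W)_0 is the charge-0 graded piece with ch(x_i)=1, ch(p)=−n. -/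
open MvPolynomial

noncomputable section

/-- The charge grading on `ℂ[x_1,…,x_n,p]`: `ch(x_i) = 1`, `ch(p) = -n`
(variables indexed by `Fin (n+1)`, `p = Fin.last n`). -/
def chargeWt (n : ℕ) : Fin (n + 1) → ℤ :=
  fun v => if v = Fin.last n then -(n : ℤ) else 1

/-- The Jacobian ideal `J(f) = (∂f/∂x_1, …, ∂f/∂x_n)`. -/
def Jf (n : ℕ) (f : MvPolynomial (Fin n) ℂ) : Ideal (MvPolynomial (Fin n) ℂ) :=
  Ideal.span (Set.range fun i => pderiv i f)

/-- The potential `W = p · f(x)` in `ℂ[x_1,…,x_n,p]`. -/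
def Wpol (n : ℕ) (f : MvPolynomial (Fin n) ℂ) : MvPolynomial (Fin (n + 1)) ℂ :=
  X (Fin.last n) * rename Fin.castSucc f

/-- The Jacobian ideal `J(W) = (∂W/∂x_1, …, ∂W/∂x_n, ∂W/∂p)`. -/
def JW (n : ℕ) (f : MvPolynomial (Fin n) ℂ) : Ideal (MvPolynomial (Fin (n + 1)) ℂ) :=
  Ideal.span (Set.range fun v => pderiv v (Wpol n f))

/-- The subring `⊕_{k ≥ 0} R(f)_{kn}` of the Jacobian ring `R(f) = ℂ[x]/J(f)`:
the subalgebra generated by classes of homogeneous polynomials of degree a multiple of `n`. -/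
def veroneseJacobian (n : ℕ) (f : MvPolynomial (Fin n) ℂ) :
    Subalgebra ℂ (MvPolynomial (Fin n) ℂ ⧸ Jf n f) :=
  Algebra.adjoin ℂ
    {a | ∃ (k : ℕ) (u : MvPolynomial (Fin n) ℂ),
      u.IsHomogeneous (k * n) ∧ a = Ideal.Quotient.mk (Jf n f) u}

/-- The charge-`0` graded piece `R(W)_0` of the Jacobian ring `R(W) = ℂ[x,p]/J(W)`:
the subalgebra generated by classes of charge-homogeneous polynomials of charge `0`. -/
def chargeZeroJacobian (n : ℕ) (f : MvPolynomial (Fin n) ℂ) :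
    Subalgebra ℂ (MvPolynomial (Fin (n + 1)) ℂ ⧸ JW n f) :=
  Algebra.adjoin ℂ
    {a | ∃ w : MvPolynomial (Fin (n + 1)) ℂ,
      w.IsWeightedHomogeneous (chargeWt n) 0 ∧ a = Ideal.Quotient.mk (JW n f) w}

/-!
Setting `p = 1` is a ring map `ℂ[x, p] → ℂ[x]`. It sends `∂W/∂x_i = p ∂f/∂x_i` to `∂f/∂x_i`
and `∂W/∂p = f` into `J(f)` (Euler's identity), so it descends to `R(W) → R(f)`. A polynomial of
charge `0` is a sum `∑ p^k u_k` with `u_k` homogeneous of degree `kn`, and it is sent to `∑ u_k`;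
hence the image of `R(W)_0` is the Veronese subring. For injectivity, `J(f)` is a homogeneous
ideal, so `∑ u_k ∈ J(f)` forces every `u_k ∈ J(f)`. Then `p^k u_k ∈ J(W)` for `k ≥ 1` because
`p · J(f) ⊆ J(W)`, while `u_0` is a constant lying in `J(f)`, which is generated in degree
`n - 1 ≥ 1`, so `u_0 = 0`.
-/

namespace Finsupp

variable {n : ℕ}

def init {M : Type*} [Zero M] (m : Fin (n + 1) →₀ M) : Fin n →₀ M :=
  comapDomain Fin.castSucc m (Fin.castSucc_injective n).injOn

@[simp]
lemma init_apply {M : Type*} [Zero M] (m : Fin (n + 1) →₀ M) (i : Fin n) :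
    init m i = m (Fin.castSucc i) :=
  rfl

lemma single_last_add_mapDomain_init {M : Type*} [AddCommMonoid M] (m : Fin (n + 1) →₀ M) :
    single (Fin.last n) (m (Fin.last n)) + mapDomain Fin.castSucc (init m) = m := by
  ext v
  induction v using Fin.lastCases with
  | last =>
    rw [add_apply, mapDomain_of_notMem_range _ _ fun ⟨i, hi⟩ => (Fin.castSucc_lt_last i).ne hi,
      single_eq_same, add_zero]
  | cast i =>
    rw [add_apply, single_eq_of_ne (Fin.castSucc_lt_last i).ne,
      mapDomain_apply (Fin.castSucc_injective n), init_apply, zero_add]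

lemma weight_mapDomain {σ τ M : Type*} [AddCommMonoid M] (w : τ → M) (e : σ → τ)
    (m : σ →₀ ℕ) : weight w (mapDomain e m) = weight (w ∘ e) m :=
  linearCombination_mapDomain ℕ e m

lemma cast_degree_eq_weight_one {σ M : Type*} [AddCommMonoidWithOne M] (m : σ →₀ ℕ) :
    (m.degree : M) = weight 1 m := by
  simp [weight_apply, degree_apply, Finsupp.sum]

end Finsupp

lemma chargeWt_comp_castSucc (n : ℕ) : chargeWt n ∘ Fin.castSucc = 1 :=
  funext fun i => if_neg (Fin.castSucc_lt_last i).ne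

lemma chargeWt_last (n : ℕ) : chargeWt n (Fin.last n) = -n :=
  if_pos rfl

lemma weight_chargeWt {n : ℕ} (m : Fin (n + 1) →₀ ℕ) :
    Finsupp.weight (chargeWt n) m = ((Finsupp.init m).degree : ℤ) - m (Fin.last n) * n := by
  conv_lhs => rw [← Finsupp.single_last_add_mapDomain_init m]
  rw [map_add, Finsupp.weight_single, chargeWt_last, Finsupp.weight_mapDomain,
    chargeWt_comp_castSucc, ← Finsupp.cast_degree_eq_weight_one, nsmul_eq_mul]
  ring

namespace MvPolynomial

variable {R : Type*} [CommSemiring R]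

lemma IsWeightedHomogeneous.rename {σ τ M : Type*} [AddCommMonoid M] {w : τ → M} {e : σ → τ}
    {φ : MvPolynomial σ R} {d : M} (hφ : φ.IsWeightedHomogeneous (w ∘ e) d) :
    (rename e φ).IsWeightedHomogeneous w d := by
  rw [← φ.support_sum_monomial_coeff, map_sum]
  refine IsWeightedHomogeneous.sum _ _ _ fun m hm => ?_
  rw [rename_monomial]
  exact isWeightedHomogeneous_monomial _ _ _ <| by
    rw [Finsupp.weight_mapDomain]; exact hφ (mem_support_iff.1 hm)

lemma IsHomogeneous.isWeightedHomogeneous_one {σ M : Type*} [AddCommMonoidWithOne M]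
    {φ : MvPolynomial σ R} {d : ℕ} (hφ : φ.IsHomogeneous d) :
    φ.IsWeightedHomogeneous (1 : σ → M) d := fun m hm => by
  rw [← Finsupp.cast_degree_eq_weight_one, Finsupp.degree_eq_weight_one]
  exact congrArg Nat.cast (hφ hm)

variable {n : ℕ}

lemma monomial_eq_X_last_pow_mul_rename_init (m : Fin (n + 1) →₀ ℕ) (c : R) :
    monomial m c =
      X (Fin.last n) ^ m (Fin.last n) * rename Fin.castSucc (monomial (Finsupp.init m) c) := by
  rw [rename_monomial, X_pow_eq_monomial, monomial_mul, one_mul,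
    Finsupp.single_last_add_mapDomain_init]

lemma X_last_pow_mul_rename_isWeightedHomogeneous {k : ℕ} {u : MvPolynomial (Fin n) R}
    (hu : u.IsHomogeneous (k * n)) :
    (X (Fin.last n) ^ k * rename Fin.castSucc u).IsWeightedHomogeneous (chargeWt n) 0 := by
  have hX : (X (Fin.last n) ^ k : MvPolynomial (Fin (n + 1)) R).IsWeightedHomogeneous
      (chargeWt n) (-(k * n : ℕ)) := by
    rw [X_pow_eq_monomial]
    refine isWeightedHomogeneous_monomial _ _ _ ?_
    rw [Finsupp.weight_single, chargeWt_last]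
    push_cast; ring
  have hu' : (rename Fin.castSucc u).IsWeightedHomogeneous (chargeWt n) (k * n : ℕ) :=
    IsWeightedHomogeneous.rename <| by
      rw [chargeWt_comp_castSucc]; exact hu.isWeightedHomogeneous_one
  simpa using hX.mul hu'

lemma exists_sum_X_last_pow_mul_rename {w : MvPolynomial (Fin (n + 1)) R}
    (hw : w.IsWeightedHomogeneous (chargeWt n) 0) :
    ∃ (N : ℕ) (u : ℕ → MvPolynomial (Fin n) R), (∀ k, (u k).IsHomogeneous (k * n)) ∧
      w = ∑ k ∈ Finset.range N, X (Fin.last n) ^ k * rename Fin.castSucc (u k) := by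
  classical
  let fiber (k : ℕ) := w.support.filter fun m => m (Fin.last n) = k
  refine ⟨w.totalDegree + 1, fun k => ∑ m ∈ fiber k, monomial (Finsupp.init m) (coeff m w),
    fun k => IsHomogeneous.sum _ _ _ fun m hm => isHomogeneous_monomial _ ?_, ?_⟩
  · obtain ⟨hmw, rfl⟩ := Finset.mem_filter.1 hm
    have := hw (mem_support_iff.1 hmw)
    rw [weight_chargeWt] at this
    omega
  · have hfiber (k : ℕ) : X (Fin.last n) ^ k *
        rename Fin.castSucc (∑ m ∈ fiber k, monomial (Finsupp.init m) (coeff m w)) =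
          ∑ m ∈ fiber k, monomial m (coeff m w) := by
      rw [map_sum, Finset.mul_sum]
      refine Finset.sum_congr rfl fun m hm => ?_
      rw [← (Finset.mem_filter.1 hm).2, ← monomial_eq_X_last_pow_mul_rename_init]
    simp_rw [hfiber]
    rw [Finset.sum_fiberwise_of_maps_to fun m hm => Finset.mem_range.2 <|
      Nat.lt_succ_of_le ((Finsupp.le_degree _ m).trans (le_totalDegree hm)), ← w.as_sum]

variable (n R) in
def evalLastOne : MvPolynomial (Fin (n + 1)) R →ₐ[R] MvPolynomial (Fin n) R :=
  aeval (Fin.lastCases 1 X)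

@[simp]
lemma evalLastOne_X_last : evalLastOne R n (X (Fin.last n)) = 1 := by
  simp [evalLastOne]

@[simp]
lemma evalLastOne_rename (u : MvPolynomial (Fin n) R) :
    evalLastOne R n (rename Fin.castSucc u) = u := by
  have hcomp : (Fin.lastCases 1 X : Fin (n + 1) → MvPolynomial (Fin n) R) ∘ Fin.castSucc = X :=
    by funext i; simp
  rw [evalLastOne, aeval_rename, hcomp, aeval_X_left_apply]

lemma evalLastOne_X_last_pow_mul_rename (k : ℕ) (u : MvPolynomial (Fin n) R) :
    evalLastOne R n (X (Fin.last n) ^ k * rename Fin.castSucc u) = u := by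
  simp

end MvPolynomial

section Jacobian

variable {n : ℕ} {f : MvPolynomial (Fin n) ℂ}

attribute [local instance] MvPolynomial.gradedAlgebra

lemma pderiv_Wpol_castSucc (f : MvPolynomial (Fin n) ℂ) (i : Fin n) :
    pderiv (Fin.castSucc i) (Wpol n f) = X (Fin.last n) * rename Fin.castSucc (pderiv i f) := by
  rw [Wpol, pderiv_mul, pderiv_rename (Fin.castSucc_injective n),
    pderiv_X_of_ne (Fin.castSucc_lt_last i).ne', zero_mul, zero_add]

lemma pderiv_Wpol_last (f : MvPolynomial (Fin n) ℂ) :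
    pderiv (Fin.last n) (Wpol n f) = rename Fin.castSucc f := by
  rw [Wpol, pderiv_mul, pderiv_X_self, one_mul, add_eq_left, mul_eq_zero_of_right]
  refine pderiv_eq_zero_of_notMem_vars fun h => ?_
  obtain ⟨i, -, hi⟩ := Finset.mem_image.1 (vars_rename _ f h)
  exact (Fin.castSucc_lt_last i).ne hi

lemma X_last_mul_rename_mem_JW {u : MvPolynomial (Fin n) ℂ} (hu : u ∈ Jf n f) :
    X (Fin.last n) * rename Fin.castSucc u ∈ JW n f := by
  induction hu using Submodule.span_induction with
  | mem _ h =>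
    obtain ⟨i, rfl⟩ := h
    rw [← pderiv_Wpol_castSucc]
    exact Ideal.subset_span ⟨_, rfl⟩
  | zero => simp
  | add _ _ _ _ h₁ h₂ => rw [map_add, mul_add]; exact add_mem h₁ h₂
  | smul a _ _ h => rw [smul_eq_mul, map_mul, mul_left_comm]; exact Ideal.mul_mem_left _ _ h

lemma self_mem_Jf (hn : n ≠ 0) (hf : f.IsHomogeneous n) : f ∈ Jf n f := by
  have hsum : (n : ℂ) • f ∈ Jf n f := by
    rw [Nat.cast_smul_eq_nsmul, ← hf.sum_X_mul_pderiv]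
    exact Ideal.sum_mem _ fun i _ => Ideal.mul_mem_left _ _ (Ideal.subset_span ⟨i, rfl⟩)
  simpa [hn] using (Jf n f).smul_of_tower_mem (n : ℂ)⁻¹ hsum

lemma Jf_isHomogeneous (hf : f.IsHomogeneous n) :
    (Jf n f).IsHomogeneous (homogeneousSubmodule (Fin n) ℂ) :=
  Ideal.homogeneous_span _ _ <| by
    rintro _ ⟨i, rfl⟩
    exact ⟨n - 1, hf.pderiv⟩

lemma Jf_le_ker_constantCoeff (hn : 2 ≤ n) (hf : f.IsHomogeneous n) :
    Jf n f ≤ RingHom.ker constantCoeff :=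
  Ideal.span_le.2 <| by
    rintro _ ⟨i, rfl⟩
    exact hf.pderiv.coeff_eq_zero (by simp; omega)

lemma eq_zero_of_mem_Jf_of_isHomogeneous_zero (hn : 2 ≤ n) (hf : f.IsHomogeneous n)
    {u : MvPolynomial (Fin n) ℂ} (hu : u ∈ Jf n f) (h₀ : u.IsHomogeneous 0) : u = 0 := by
  rw [totalDegree_eq_zero_iff_eq_C.1 ((totalDegree_zero_iff_isHomogeneous _).2 h₀),
    ← constantCoeff_eq, RingHom.mem_ker.1 (Jf_le_ker_constantCoeff hn hf hu), C_0]

lemma X_last_pow_mul_rename_mem_JW (hn : 2 ≤ n) (hf : f.IsHomogeneous n) {k : ℕ}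
    {u : MvPolynomial (Fin n) ℂ} (hu : u ∈ Jf n f) (hdeg : u.IsHomogeneous (k * n)) :
    X (Fin.last n) ^ k * rename Fin.castSucc u ∈ JW n f := by
  cases k with
  | zero =>
    rw [eq_zero_of_mem_Jf_of_isHomogeneous_zero hn hf hu (by simpa using hdeg), map_zero,
      mul_zero]
    exact zero_mem _
  | succ k =>
    rw [pow_succ, mul_assoc]
    exact Ideal.mul_mem_left _ _ (X_last_mul_rename_mem_JW hu)

lemma mem_JW_of_evalLastOne_mem_Jf (hn : 2 ≤ n) (hf : f.IsHomogeneous n)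
    {w : MvPolynomial (Fin (n + 1)) ℂ} (hw : w.IsWeightedHomogeneous (chargeWt n) 0)
    (h : evalLastOne ℂ n w ∈ Jf n f) : w ∈ JW n f := by
  obtain ⟨N, u, hu, rfl⟩ := exists_sum_X_last_pow_mul_rename hw
  simp only [map_sum, evalLastOne_X_last_pow_mul_rename] at h
  refine Ideal.sum_mem _ fun k hk => X_last_pow_mul_rename_mem_JW hn hf ?_ (hu k)
  have hcomp := homogeneousComponent_mem_of_mem (Jf_isHomogeneous hf) h (k * n)
  simpa only [map_sum, homogeneousComponent_of_mem (hu _), Nat.mul_left_inj (by omega : n ≠ 0),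
    Finset.sum_ite_eq, if_pos hk] using hcomp

lemma JW_le_comap_evalLastOne (hJ : f ∈ Jf n f) :
    JW n f ≤ (Jf n f).comap (evalLastOne ℂ n) :=
  Ideal.span_le.2 <| by
    rintro _ ⟨v, rfl⟩
    simp only [SetLike.mem_coe, Ideal.mem_comap]
    induction v using Fin.lastCases with
    | last => simpa [pderiv_Wpol_last] using hJ
    | cast i =>
      rw [pderiv_Wpol_castSucc, ← pow_one (X _), evalLastOne_X_last_pow_mul_rename]
      exact Ideal.subset_span ⟨i, rfl⟩

def jacobianEval (hJ : f ∈ Jf n f) :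
    MvPolynomial (Fin (n + 1)) ℂ ⧸ JW n f →ₐ[ℂ] MvPolynomial (Fin n) ℂ ⧸ Jf n f :=
  Ideal.quotientMapₐ _ (evalLastOne ℂ n) (JW_le_comap_evalLastOne hJ)

lemma jacobianEval_mk (hJ : f ∈ Jf n f) (w : MvPolynomial (Fin (n + 1)) ℂ) :
    jacobianEval hJ (Ideal.Quotient.mk _ w) = Ideal.Quotient.mk _ (evalLastOne ℂ n w) :=
  rfl

lemma mem_chargeZeroJacobian_iff {z : MvPolynomial (Fin (n + 1)) ℂ ⧸ JW n f} :
    z ∈ chargeZeroJacobian n f ↔ ∃ w : MvPolynomial (Fin (n + 1)) ℂ,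
      w.IsWeightedHomogeneous (chargeWt n) 0 ∧ z = Ideal.Quotient.mk (JW n f) w := by
  refine ⟨fun hz => ?_, fun hz => Algebra.subset_adjoin hz⟩
  induction hz using Algebra.adjoin_induction with
  | mem _ hx => exact hx
  | algebraMap r => exact ⟨C r, isWeightedHomogeneous_C _ r, rfl⟩
  | add _ _ _ _ hx hy =>
    obtain ⟨w₁, hw₁, rfl⟩ := hx
    obtain ⟨w₂, hw₂, rfl⟩ := hy
    exact ⟨w₁ + w₂, hw₁.add hw₂, (map_add _ _ _).symm⟩
  | mul _ _ _ _ hx hy =>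
    obtain ⟨w₁, hw₁, rfl⟩ := hx
    obtain ⟨w₂, hw₂, rfl⟩ := hy
    exact ⟨w₁ * w₂, by simpa using hw₁.mul hw₂, (map_mul _ _ _).symm⟩

lemma mk_X_last_pow_mul_rename_mem_chargeZeroJacobian (f : MvPolynomial (Fin n) ℂ) {k : ℕ}
    {u : MvPolynomial (Fin n) ℂ} (hu : u.IsHomogeneous (k * n)) :
    Ideal.Quotient.mk (JW n f) (X (Fin.last n) ^ k * rename Fin.castSucc u) ∈
      chargeZeroJacobian n f :=
  Algebra.subset_adjoin ⟨_, X_last_pow_mul_rename_isWeightedHomogeneous hu, rfl⟩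

lemma jacobianEval_comp_val_injective (hn : 2 ≤ n) (hf : f.IsHomogeneous n) (hJ : f ∈ Jf n f) :
    Function.Injective ((jacobianEval hJ).comp (chargeZeroJacobian n f).val) := by
  rintro ⟨_, hz₁⟩ ⟨_, hz₂⟩ h
  obtain ⟨w₁, hw₁, rfl⟩ := mem_chargeZeroJacobian_iff.1 hz₁
  obtain ⟨w₂, hw₂, rfl⟩ := mem_chargeZeroJacobian_iff.1 hz₂
  simp only [AlgHom.comp_apply, Subalgebra.coe_val, jacobianEval_mk, Ideal.Quotient.eq,
    ← map_sub] at h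
  exact Subtype.ext (Ideal.Quotient.eq.2 (mem_JW_of_evalLastOne_mem_Jf hn hf (hw₁.sub hw₂) h))

lemma range_jacobianEval_comp_val (hJ : f ∈ Jf n f) :
    ((jacobianEval hJ).comp (chargeZeroJacobian n f).val).range = veroneseJacobian n f := by
  refine le_antisymm ?_ (Algebra.adjoin_le ?_)
  · rintro _ ⟨⟨_, hz⟩, rfl⟩
    obtain ⟨w, hw, rfl⟩ := mem_chargeZeroJacobian_iff.1 hz
    obtain ⟨N, u, hu, rfl⟩ := exists_sum_X_last_pow_mul_rename hw
    change jacobianEval hJ (Ideal.Quotient.mk _ _) ∈ _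
    rw [jacobianEval_mk, map_sum, map_sum]
    refine Subalgebra.sum_mem _ fun k _ => ?_
    rw [evalLastOne_X_last_pow_mul_rename]
    exact Algebra.subset_adjoin ⟨k, u k, hu k, rfl⟩
  · rintro _ ⟨k, u, hu, rfl⟩
    exact ⟨⟨_, mk_X_last_pow_mul_rename_mem_chargeZeroJacobian f hu⟩,
      congrArg (Ideal.Quotient.mk _) (evalLastOne_X_last_pow_mul_rename k u)⟩

end Jacobian

/-- The map `⊕_{k ≥ 0} R(f)_{kn} → R(W)_0` sending the class of a
homogeneous polynomial `u(x)` of degree `kn` to the class of `p^k · u(x)` is a well-defined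
ring isomorphism. -/
theorem veronese_jacobian_iso_charge_zero_jacobian
    (n : ℕ) (hn : 2 ≤ n)
    (f : MvPolynomial (Fin n) ℂ) (hf : f.IsHomogeneous n) :
    ∃ Φ : veroneseJacobian n f ≃+* chargeZeroJacobian n f,
      ∀ (k : ℕ) (u : MvPolynomial (Fin n) ℂ) (hu : u.IsHomogeneous (k * n)),
        (Φ ⟨Ideal.Quotient.mk (Jf n f) u, Algebra.subset_adjoin ⟨k, u, hu, rfl⟩⟩ :
            MvPolynomial (Fin (n + 1)) ℂ ⧸ JW n f)
          = Ideal.Quotient.mk (JW n f)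
              ((X (Fin.last n)) ^ k * rename Fin.castSucc u) := by
  have hJ := self_mem_Jf (by omega) hf
  let e := (AlgEquiv.ofInjective _ (jacobianEval_comp_val_injective hn hf hJ)).trans
    (Subalgebra.equivOfEq _ _ (range_jacobianEval_comp_val hJ))
  refine ⟨e.symm.toRingEquiv, fun k u hu => ?_⟩
  have he : e ⟨_, mk_X_last_pow_mul_rename_mem_chargeZeroJacobian f hu⟩ =
      ⟨Ideal.Quotient.mk (Jf n f) u, Algebra.subset_adjoin ⟨k, u, hu, rfl⟩⟩ :=
    Subtype.ext (congrArg (Ideal.Quotient.mk _) (evalLastOne_X_last_pow_mul_rename k u))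
  exact congrArg Subtype.val (e.symm_apply_eq.2 he.symm)
end
end

section
/- Let f ∈ ℂ[x_1,…,x_n] be homogeneous of degree n with isolated singularity at 0, and W = p·f on X_CY = Tot(O_{P^{n−1}}(−n)). Then the critical locus of W (the common zero locus of p·∂f/∂x_1,…,p·∂f/∂x_n, f inside X_CY) equals the hypersurface V = {f = 0} embedded in the zero section P^{n−1} ⊂ X_CY. -/
open MvPolynomial

/-- Let `f` be homogeneous of degree `n` with an isolated singularity at `0`
and `W = p·f` on `X_CY = Tot(O_{P^{n-1}}(-n)) = ((ℂ^n \ {0}) × ℂ)/ℂ*`.  In the homogeneous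
coordinates `(x, p)` (with `x ≠ 0`), the critical locus of `W` — the common zero locus of
`∂W/∂x_i = p·∂f/∂x_i` and `∂W/∂p = f` — is exactly the locus `{f(x) = 0, p = 0}`, i.e. the
hypersurface `V = {f = 0} ⊂ P^{n-1}` embedded in the zero section of `X_CY`. -/
theorem critical_locus_of_W_is_V_in_zero_section
    (n : ℕ) (hn : 2 ≤ n)
    (f : MvPolynomial (Fin n) ℂ) (hf : f.IsHomogeneous n)
    (hiso : ∀ x : Fin n → ℂ, (∀ i, eval x (pderiv i f) = 0) → x = 0) :
    ∀ x : Fin n → ℂ, x ≠ 0 → ∀ p : ℂ,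
      ((∀ i, p * eval x (pderiv i f) = 0) ∧ eval x f = 0) ↔ (p = 0 ∧ eval x f = 0) := by
  intro x hx p
  constructor
  · rintro ⟨h1, h2⟩
    refine ⟨?_, h2⟩
    by_contra hp
    exact hx (hiso x fun i => by
      have := h1 i
      exact (mul_eq_zero.mp this).resolve_left hp)
  · rintro ⟨hp, h2⟩
    exact ⟨fun i => by simp [hp], h2⟩
end
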